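/- arXiv:1810.05309 — 3 statements merged into one kernel-verified Lean document; each statement's English description precedes it below -/
import Mathlib

section
/- For s > 0, ρ > 0, and η > 2, the integral ∫_{(sρ)^{-1/η}}^∞ y/(y^η + 1) dy equals (sρ)^{(η-2)/η} · ₂F₁(1, 1 - 2/η; 2 - 2/η; -sρ) / (η - 2), when s = kθ/ρ this gives the term kθ · ₂F₁(1, 1-2/η; 2-2/η; -kθ)/(η-2) appearing in the inter-cell interference Laplace transform. -/
/-! The substitution `y = x ^ (-1/η)` maps `(0, t)` onto `(t ^ (-1/η), ∞)` and turns the integral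
into `η⁻¹ ∫₀ᵗ x ^ (-2/η) / (1 + x) dx`; rescaling `x = t u` gives
`η⁻¹ t ^ b ∫₀¹ u ^ (b-1) (1 + t u)⁻¹ du` with `b = 1 - 2/η`. This is Euler's integral for
`₂F₁(1, b; b + 1; -t)` up to the factor `Γ(b + 1) / Γ(b) = b`, and `b / (η - 2) = 1 / η`. -/

open Real MeasureTheory

/-- The Gauss hypergeometric function `₂F₁(a,b;c;z)` via the Euler integral representation
(valid for `c > b > 0` and `z < 1`, which extends the series by analytic continuation). -/
noncomputable def twoF1 (a b c z : ℝ) : ℝ :=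
  (Real.Gamma c / (Real.Gamma b * Real.Gamma (c - b))) *
    ∫ u in (0:ℝ)..1, u ^ (b - 1) * (1 - u) ^ (c - b - 1) * (1 - z * u) ^ (-a)

open Set

theorem twoF1_add_one (a z : ℝ) {b : ℝ} (hb : 0 < b) :
    twoF1 a b (b + 1) z = b * ∫ u in (0:ℝ)..1, u ^ (b - 1) * (1 - z * u) ^ (-a) := by
  have hGamma : Gamma (b + 1) / (Gamma b * Gamma 1) = b := by
    rw [Gamma_one, mul_one, Gamma_add_one hb.ne',
      mul_div_cancel_right₀ _ (Gamma_pos_of_pos hb).ne']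
  simp only [twoF1, hGamma, add_sub_cancel_left, sub_self, rpow_zero, mul_one]

theorem image_rpow_Ioo_zero_of_neg {p c : ℝ} (hp : p < 0) (hc : 0 < c) :
    (· ^ p) '' Ioo 0 c = Ioi (c ^ p) := by
  ext y
  constructor
  · rintro ⟨x, ⟨hx0, hxc⟩, rfl⟩
    exact rpow_lt_rpow_of_neg hx0 hxc hp
  · intro hy
    have hy0 : 0 < y := (rpow_pos_of_pos hc p).trans hy
    refine ⟨y ^ p⁻¹, ⟨rpow_pos_of_pos hy0 _, ?_⟩, rpow_inv_rpow hy0.le hp.ne⟩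
    calc y ^ p⁻¹ < (c ^ p) ^ p⁻¹ :=
          rpow_lt_rpow_of_neg (rpow_pos_of_pos hc p) hy (inv_lt_zero.mpr hp)
      _ = c := rpow_rpow_inv hc.le hp.ne

theorem integral_comp_rpow_Ioo_of_neg {E : Type*} [NormedAddCommGroup E] [NormedSpace ℝ E]
    (g : ℝ → E) {p c : ℝ} (hp : p < 0) (hc : 0 < c) :
    ∫ x in Ioo 0 c, (-p * x ^ (p - 1)) • g (x ^ p) = ∫ y in Ioi (c ^ p), g y := by
  rw [← image_rpow_Ioo_zero_of_neg hp hc, integral_image_eq_integral_abs_deriv_smul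
    measurableSet_Ioo (fun x hx ↦ (hasDerivAt_rpow_const (.inl hx.1.ne')).hasDerivWithinAt)
    ((rpow_left_injOn hp.ne).mono fun x hx ↦ hx.1.le)]
  refine setIntegral_congr_fun measurableSet_Ioo fun x hx ↦ ?_
  rw [abs_of_neg (mul_neg_of_neg_of_pos hp (rpow_pos_of_pos hx.1 _)), neg_mul]

theorem intervalIntegral_rpow_mul_comp_mul (f : ℝ → ℝ) (s : ℝ) {t : ℝ} (ht : 0 < t) :
    ∫ x in (0:ℝ)..t, x ^ s * f x = t ^ (s + 1) * ∫ u in (0:ℝ)..1, u ^ s * f (t * u) := by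
  have hscale : t • ∫ u in (0:ℝ)..1, (t * u) ^ s * f (t * u) = ∫ x in t * 0..t * 1, x ^ s * f x :=
    intervalIntegral.smul_integral_comp_mul_left (fun x ↦ x ^ s * f x) t
  rw [mul_zero, mul_one] at hscale
  rw [← hscale, smul_eq_mul, rpow_add_one ht.ne', mul_comm (t ^ s) t, mul_assoc]
  congr 1
  rw [← intervalIntegral.integral_const_mul]
  refine intervalIntegral.integral_congr fun u hu ↦ ?_
  have hu0 : 0 ≤ u := by simpa using hu.1
  simp only [mul_rpow ht.le hu0]
  ring

theorem integral_Ioi_div_one_add_rpow {t η : ℝ} (ht : 0 < t) (hη : 0 < η) :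
    ∫ y in Ioi (t ^ (-1 / η)), y / (1 + y ^ η)
      = η⁻¹ * ∫ x in (0:ℝ)..t, x ^ (-2 / η) * (1 + x)⁻¹ := by
  rw [← integral_comp_rpow_Ioo_of_neg _ (div_neg_of_neg_of_pos neg_one_lt_zero hη) ht,
    intervalIntegral.integral_of_le ht.le, integral_Ioc_eq_integral_Ioo,
    ← integral_const_mul]
  refine setIntegral_congr_fun measurableSet_Ioo fun x hx ↦ ?_
  have hx0 : 0 < x := hx.1
  have hpow : (x ^ (-1 / η)) ^ η = x⁻¹ := by
    rw [← rpow_mul hx0.le, div_mul_cancel₀ _ hη.ne', rpow_neg_one]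
  have hsq : x ^ (-2 / η) = x ^ (-1 / η) * x ^ (-1 / η) := by
    rw [← rpow_add hx0]; ring_nf
  rw [smul_eq_mul, hpow, rpow_sub_one hx0.ne', hsq]
  field_simp
  ring

/-- For `t > 0` and path-loss exponent `η > 2`,
`∫_{t^{-1/η}}^∞ y/(1 + y^η) dy = t^{1-2/η} ₂F₁(1, 1-2/η; 2-2/η; -t)/(η-2)`,
the integral arising in the Laplace transform of the inter-cell interference. -/
theorem intercell_interference_integral (t η : ℝ) (ht : 0 < t) (hη : 2 < η) :
    ∫ y in Set.Ioi (t ^ (-1 / η) : ℝ), y / (1 + y ^ η)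
      = t ^ (1 - 2 / η) * twoF1 1 (1 - 2 / η) (2 - 2 / η) (-t) / (η - 2) := by
  have hη0 : 0 < η := by linarith
  have hb : 0 < 1 - 2 / η := by rw [sub_pos, div_lt_one hη0]; exact hη
  have hintegrand : ∫ u in (0:ℝ)..1, u ^ (1 - 2 / η - 1) * (1 - -t * u) ^ (-1 : ℝ)
      = ∫ u in (0:ℝ)..1, u ^ (-2 / η) * (1 + t * u)⁻¹ := by
    simp only [sub_sub_cancel_left, neg_div, sub_neg_eq_add, neg_mul, rpow_neg_one]
  rw [show 2 - 2 / η = 1 - 2 / η + 1 by ring, twoF1_add_one _ _ hb, hintegrand,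
    integral_Ioi_div_one_add_rpow ht hη0,
    intervalIntegral_rpow_mul_comp_mul (fun x ↦ (1 + x)⁻¹) _ ht,
    show -2 / η + 1 = 1 - 2 / η by ring]
  field_simp [(sub_pos.mpr hη).ne']
end

section
/- Deconditioning the truncated-exponential Laplace transform over the maximum of n+1 i.i.d. exponentials: for s = kθ (with θ > 0, k ≥ 1 natural) and n ≥ 1, ∫_0^∞ [(1 - e^{-(s+1)y})/((1+s)(1 - e^{-y}))] · (n+1)(1-e^{-y})^n e^{-y} dy = ((n+1)/(1+kθ)) · (1/n - Γ(n)Γ(2+kθ)/Γ(2+n+kθ)). -/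
/-!
Substituting `t = e^{-y}` turns the integral into
`(n+1)/(1+s) · ∫₀¹ (1 - t^{s+1}) (1-t)^{n-1} dt`, a difference of two Beta integrals
`B(1, n) - B(s+2, n) = 1/n - Γ(n) Γ(s+2) / Γ(s+n+2)`.
-/

open Real MeasureTheory Set ProbabilityTheory

theorem ofReal_rpow_mul_one_sub_rpow {x : ℝ} (hx : x ∈ Icc 0 1) (α β : ℝ) :
    ((x ^ (α - 1) * (1 - x) ^ (β - 1) : ℝ) : ℂ)
      = (x : ℂ) ^ ((α : ℂ) - 1) * (1 - (x : ℂ)) ^ ((β : ℂ) - 1) := by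
  rw [Complex.ofReal_mul, Complex.ofReal_cpow hx.1, Complex.ofReal_cpow (sub_nonneg.2 hx.2)]
  push_cast
  rfl

theorem intervalIntegrable_rpow_mul_one_sub_rpow {α β : ℝ} (hα : 0 < α) (hβ : 0 < β) :
    IntervalIntegrable (fun x => x ^ (α - 1) * (1 - x) ^ (β - 1)) volume 0 1 := by
  have hconv := Complex.betaIntegral_convergent (u := α) (v := β) (by simpa) (by simpa)
  rw [intervalIntegrable_iff_integrableOn_Icc_of_le zero_le_one] at hconv ⊢
  refine IntegrableOn.congr_fun hconv.re (fun x hx => ?_) measurableSet_Icc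
  rw [← ofReal_rpow_mul_one_sub_rpow hx, RCLike.re_to_complex, Complex.ofReal_re]

theorem intervalIntegral_rpow_mul_one_sub_rpow_eq_beta {α β : ℝ} (hα : 0 < α) (hβ : 0 < β) :
    ∫ x in (0:ℝ)..1, x ^ (α - 1) * (1 - x) ^ (β - 1) = beta α β := by
  have hcomplex : Complex.betaIntegral α β =
      ↑(∫ x in (0:ℝ)..1, x ^ (α - 1) * (1 - x) ^ (β - 1)) := by
    rw [Complex.betaIntegral, ← intervalIntegral.integral_ofReal]
    refine intervalIntegral.integral_congr fun x hx => ?_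
    rw [uIcc_of_le zero_le_one] at hx
    exact (ofReal_rpow_mul_one_sub_rpow hx α β).symm
  rw [beta_eq_betaIntegralReal α β hα hβ, hcomplex, Complex.ofReal_re]

theorem beta_one_left {β : ℝ} (hβ : 0 < β) : beta 1 β = 1 / β := by
  rw [beta, Gamma_one, add_comm, Gamma_add_one hβ.ne', one_mul]
  field_simp [(Gamma_pos_of_pos hβ).ne']

theorem image_exp_neg_Ioi_zero : (fun y => exp (-y)) '' Ioi 0 = Ioo 0 1 := by
  rw [show (fun y => exp (-y)) = exp ∘ Neg.neg from rfl, image_comp, image_neg_Ioi, neg_zero,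
    image_exp_Iio, exp_zero]

theorem integral_comp_exp_neg_Ioi {E : Type*} [NormedAddCommGroup E] [NormedSpace ℝ E]
    (g : ℝ → E) : ∫ y in Ioi 0, exp (-y) • g (exp (-y)) = ∫ t in Ioo 0 1, g t := by
  symm
  rw [← image_exp_neg_Ioi_zero]
  simpa [abs_of_pos (exp_pos _)] using integral_image_eq_integral_abs_deriv_smul
      (measurableSet_Ioi (a := (0:ℝ))) (fun y _ ↦ ((hasDerivAt_neg y).exp).hasDerivWithinAt)
      (fun x _ y _ hxy ↦ neg_injective (exp_injective hxy)) g

theorem integral_Ioo_one_sub_rpow_mul_one_sub_rpow {s β : ℝ} (hs : -2 < s) (hβ : 0 < β) :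
    ∫ t in Ioo 0 1, (1 - t ^ (s + 1)) * (1 - t) ^ (β - 1) = beta 1 β - beta (s + 2) β := by
  have hs2 : 0 < s + 2 := by linarith
  rw [← integral_Ioc_eq_integral_Ioo, ← intervalIntegral.integral_of_le zero_le_one,
    ← intervalIntegral_rpow_mul_one_sub_rpow_eq_beta one_pos hβ,
    ← intervalIntegral_rpow_mul_one_sub_rpow_eq_beta hs2 hβ,
    ← intervalIntegral.integral_sub (intervalIntegrable_rpow_mul_one_sub_rpow one_pos hβ)
      (intervalIntegrable_rpow_mul_one_sub_rpow hs2 hβ)]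
  refine intervalIntegral.integral_congr fun t _ => ?_
  simp only [sub_self, rpow_zero]
  ring_nf

theorem truncated_laplace_mul_max_density_eq_exp_neg_smul (s : ℝ) (n : ℕ) {y : ℝ}
    (hy : 0 < y) :
    (1 - exp (-(s + 1) * y)) / ((1 + s) * (1 - exp (-y))) *
        ((n + 1) * (1 - exp (-y)) ^ n * exp (-y))
      = exp (-y) •
        ((n + 1) / (1 + s) * ((1 - exp (-y) ^ (s + 1)) * (1 - exp (-y)) ^ ((n : ℝ) - 1))) := by
  have hne : 1 - exp (-y) ≠ 0 := (sub_pos.2 (exp_lt_one_iff.2 (neg_lt_zero.2 hy))).ne'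
  rw [← exp_mul, neg_mul_comm, mul_comm (s + 1), rpow_sub_one hne, rpow_natCast, smul_eq_mul]
  field_simp

theorem decondition_truncated_laplace_over_max_general
    (θ : ℝ) (hθ : 0 < θ) (k n : ℕ) (hn : 1 ≤ n) :
    ∫ y in Set.Ioi (0:ℝ),
        ((1 - Real.exp (-((k * θ) + 1) * y)) / ((1 + k * θ) * (1 - Real.exp (-y)))) *
          ((n + 1) * (1 - Real.exp (-y)) ^ n * Real.exp (-y))
      = ((n + 1) / (1 + k * θ)) *
          (1 / n - Real.Gamma n * Real.Gamma (2 + k * θ) / Real.Gamma (2 + n + k * θ)) := by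
  have hs : 0 ≤ (k : ℝ) * θ := by positivity
  have hn' : (0 : ℝ) < n := by exact_mod_cast hn
  rw [setIntegral_congr_fun measurableSet_Ioi
      fun y hy => truncated_laplace_mul_max_density_eq_exp_neg_smul (k * θ) n hy,
    integral_comp_exp_neg_Ioi
      fun t => (n + 1) / (1 + k * θ) * ((1 - t ^ (k * θ + 1)) * (1 - t) ^ ((n : ℝ) - 1)),
    integral_const_mul, integral_Ioo_one_sub_rpow_mul_one_sub_rpow (by linarith) hn',
    beta_one_left hn', beta]
  ring_nf

/-- Deconditioning the truncated-exponential Laplace transform over the maximum of `n+1`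
i.i.d. Exp(1) variables: for `s = kθ` with `θ > 0`, `k ≥ 1`, `n ≥ 1`,
`∫_0^∞ (1 - e^{-(s+1)y})/((1+s)(1-e^{-y})) · (n+1)(1-e^{-y})^n e^{-y} dy
  = ((n+1)/(1+kθ)) (1/n - Γ(n)Γ(2+kθ)/Γ(2+n+kθ))`. -/
theorem decondition_truncated_laplace_over_max
    (θ : ℝ) (hθ : 0 < θ) (k n : ℕ) (hk : 1 ≤ k) (hn : 1 ≤ n) :
    ∫ y in Set.Ioi (0:ℝ),
        ((1 - Real.exp (-((k * θ) + 1) * y)) / ((1 + k * θ) * (1 - Real.exp (-y)))) *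
          ((n + 1) * (1 - Real.exp (-y)) ^ n * Real.exp (-y))
      = ((n + 1) / (1 + k * θ)) *
          (1 / n - Real.Gamma n * Real.Gamma (2 + k * θ) / Real.Gamma (2 + n + k * θ)) :=
  decondition_truncated_laplace_over_max_general θ hθ k n hn
end

section
/- Expected waiting time for the Geo/Geo/1 queue: with stationary distribution x_0 = (p-a)/p and the waiting-time distribution defined by P(W=0)=x_0 and P(W=j)=Σ_{v=1}^j x_v B_j^{(v)} where B_j^{(1)} = (1-p)^{j-1} p, B_k^{(k)} = p^k, and B_j^{(k)} = (1-p) B_{j-1}^{(k)} + p B_{j-1}^{(k-1)} for j > k ≥ 1, the mean satisfies E[W] = Σ_j j P(W=j) = a(1-a)x_0/(p-a)². -/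
/-!
The recursion forces `B j k = C(j-1, k-1) p^k (1-p)^(j-k)`. Since `x_v` is geometric in `v`, the
binomial theorem collapses `P(W = m+1)` to `x₀ a/(1-a) · q^m` with `q = R p + (1 - p) = (1-p)/(1-a)`:
the positive part of `W` is geometric, and `E[W]` reduces to `Σ j q^j = q/(1-q)^2`.
-/

open Finset

theorem eq_choose_mul_pow_of_negBinomial_rec {K : Type*} [CommRing K] {p : K} {B : ℕ → ℕ → K}
    (hB1 : ∀ j : ℕ, 1 ≤ j → B j 1 = (1 - p) ^ (j - 1) * p)
    (hBk : ∀ k : ℕ, 1 ≤ k → B k k = p ^ k)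
    (hBrec : ∀ j k : ℕ, 1 ≤ k → k < j → B j k = (1 - p) * B (j - 1) k + p * B (j - 1) (k - 1))
    {m u : ℕ} (hum : u ≤ m) :
    B (m + 1) (u + 1) = m.choose u * p ^ (u + 1) * (1 - p) ^ (m - u) := by
  induction m generalizing u with
  | zero =>
    obtain rfl : u = 0 := by omega
    simp [hBk]
  | succ m ih =>
    rcases u with _ | u
    · simp [hB1, mul_comm]
    rcases hum.eq_or_lt with hum | hum
    · obtain rfl : u = m := by omega
      simp [hBk]
    have hrec := hBrec (m + 1 + 1) (u + 1 + 1) (by omega) (by omega)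
    simp only [Nat.add_sub_cancel] at hrec
    have hexp : m - u = m - (u + 1) + 1 := by omega
    rw [hrec, ih (by omega), ih (by omega), Nat.choose_succ_succ', Nat.add_sub_add_right, hexp]
    push_cast
    ring

theorem sum_range_pow_succ_mul_choose_mul_pow {K : Type*} [CommSemiring K] (r s t : K) (m : ℕ) :
    ∑ u ∈ range (m + 1), r ^ (u + 1) * (m.choose u * s ^ (u + 1) * t ^ (m - u))
      = r * s * (r * s + t) ^ m := by
  rw [add_pow, mul_sum]
  refine sum_congr rfl fun u _ => ?_
  ring

theorem sum_Icc_pow_mul_negBinomial_eq_geometric {K : Type*} [Field K] {a p R x₀ : K} {x : ℕ → K}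
    {B : ℕ → ℕ → K} (hp0 : p ≠ 0) (hp1 : 1 - p ≠ 0) (ha1 : 1 - a ≠ 0)
    (hR : R = a * (1 - p) / ((1 - a) * p)) (hx : ∀ v : ℕ, 1 ≤ v → x v = R ^ v * x₀ / (1 - p))
    (hB1 : ∀ j : ℕ, 1 ≤ j → B j 1 = (1 - p) ^ (j - 1) * p)
    (hBk : ∀ k : ℕ, 1 ≤ k → B k k = p ^ k)
    (hBrec : ∀ j k : ℕ, 1 ≤ k → k < j → B j k = (1 - p) * B (j - 1) k + p * B (j - 1) (k - 1))
    (m : ℕ) :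
    ∑ v ∈ Icc 1 (m + 1), x v * B (m + 1) v = x₀ * a / (1 - a) * ((1 - p) / (1 - a)) ^ m := by
  have hRp : R * p = a * (1 - p) / (1 - a) := by
    rw [hR]; field_simp
  have hRpq : R * p + (1 - p) = (1 - p) / (1 - a) := by
    rw [hRp]; field_simp; ring
  rw [← Ico_add_one_right_eq_Icc, sum_Ico_eq_sum_range, Nat.add_sub_cancel]
  calc _ = x₀ / (1 - p) * ∑ u ∈ range (m + 1),
            R ^ (u + 1) * (m.choose u * p ^ (u + 1) * (1 - p) ^ (m - u)) := by
        rw [mul_sum]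
        refine sum_congr rfl fun u hu => ?_
        rw [add_comm 1 u, hx _ (by omega),
          eq_choose_mul_pow_of_negBinomial_rec hB1 hBk hBrec (Nat.lt_succ_iff.mp (mem_range.mp hu))]
        ring
    _ = x₀ / (1 - p) * (R * p * (R * p + (1 - p)) ^ m) := by
        rw [sum_range_pow_succ_mul_choose_mul_pow]
    _ = _ := by
        rw [hRpq, hRp]
        field_simp

theorem geo_geo_one_mean_waiting_time_general
    (a p : ℝ) (ha : 0 < a) (hap : a < p) (hp : p < 1)
    (R x₀ : ℝ) (hR : R = a * (1 - p) / ((1 - a) * p))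
    (x : ℕ → ℝ) (hx : ∀ v : ℕ, 1 ≤ v → x v = R ^ v * x₀ / (1 - p))
    (B : ℕ → ℕ → ℝ)
    (hB1 : ∀ j : ℕ, 1 ≤ j → B j 1 = (1 - p) ^ (j - 1) * p)
    (hBk : ∀ k : ℕ, 1 ≤ k → B k k = p ^ k)
    (hBrec : ∀ j k : ℕ, 1 ≤ k → k < j → B j k = (1 - p) * B (j - 1) k + p * B (j - 1) (k - 1)) :
    ∑' j : ℕ, (j : ℝ) * ∑ v ∈ Finset.Icc 1 j, x v * B j v
      = a * (1 - a) * x₀ / (p - a) ^ 2 := by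
  have h1a : 0 < 1 - a := by linarith
  have h1p : 0 < 1 - p := by linarith
  set q := (1 - p) / (1 - a) with hq
  have hq0 : 0 < q := div_pos h1p h1a
  have hq_norm : ‖q‖ < 1 := by
    rw [Real.norm_of_nonneg hq0.le, div_lt_one h1a]
    linarith
  have hterm (j : ℕ) :
      (j : ℝ) * ∑ v ∈ Icc 1 j, x v * B j v = x₀ * a / (1 - a) / q * (j * q ^ j) := by
    rcases j with _ | m
    · simp
    · rw [sum_Icc_pow_mul_negBinomial_eq_geometric (ha.trans hap).ne' h1p.ne' h1a.ne' hR hx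
        hB1 hBk hBrec, ← hq, pow_succ]
      field_simp
  rw [tsum_congr hterm, tsum_mul_left, tsum_coe_mul_geometric_of_norm_lt_one hq_norm, hq]
  field_simp
  ring

/-- Expected waiting time in the Geo/Geo/1 queue: with `0 < a < p < 1`, stationary
distribution `x₀ = (p-a)/p`, `x_v = R^v x₀/(1-p)` (`v ≥ 1`, `R = a(1-p)/((1-a)p)`), and the
waiting-time distribution `P(W=0)=x₀`, `P(W=j)=Σ_{v=1}^j x_v B_j^{(v)}`, where
`B_j^{(1)} = (1-p)^{j-1} p`, `B_k^{(k)} = p^k`, and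
`B_j^{(k)} = (1-p) B_{j-1}^{(k)} + p B_{j-1}^{(k-1)}` for `j > k ≥ 1`, the mean waiting time is
`E[W] = Σ_j j P(W=j) = a(1-a)x₀/(p-a)²`. -/
theorem geo_geo_one_mean_waiting_time
    (a p : ℝ) (ha : 0 < a) (hap : a < p) (hp : p < 1)
    (R x₀ : ℝ) (hR : R = a * (1 - p) / ((1 - a) * p)) (hx0 : x₀ = (p - a) / p)
    (x : ℕ → ℝ) (hx : ∀ v : ℕ, 1 ≤ v → x v = R ^ v * x₀ / (1 - p))
    (B : ℕ → ℕ → ℝ)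
    (hB1 : ∀ j : ℕ, 1 ≤ j → B j 1 = (1 - p) ^ (j - 1) * p)
    (hBk : ∀ k : ℕ, 1 ≤ k → B k k = p ^ k)
    (hBrec : ∀ j k : ℕ, 1 ≤ k → k < j → B j k = (1 - p) * B (j - 1) k + p * B (j - 1) (k - 1)) :
    ∑' j : ℕ, (j : ℝ) * ∑ v ∈ Finset.Icc 1 j, x v * B j v
      = a * (1 - a) * x₀ / (p - a) ^ 2 :=
  geo_geo_one_mean_waiting_time_general a p ha hap hp R x₀ hR x hx B hB1 hBk hBrec
end
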